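/- Let F̃ be the coefficient tensor of a cubic map of ℝ² (symmetric in lower indices), T an invertible 2×2 real matrix, and define F^i_{mnp} = Σ_{m̃,ñ,p̃} F̃^i_{m̃ñp̃} T^m̃_m T^ñ_n T^p̃_p (right composition with the linear map given by T). Then G_{1111}(F) = det(T) · ω̃[1](T¹₁, T²₁), where ω̃[1](z¹,z²) = G̃_{1111}(z¹)⁴ + 2G̃_{1112}(z¹)³z² + (3G̃_{1212} + G̃_{1122})(z¹)²(z²)² + 2G̃_{1222} z¹(z²)³ + G̃_{2222}(z²)⁴, with G̃ the determinants of F̃. -/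
import Mathlib


/-- A cubic coefficient array on ℝ²: one upper index, three lower indices in {1,2}. -/
abbrev CubicTensor := Fin 2 → Fin 2 → Fin 2 → Fin 2 → ℝ

/-- Symmetry in the three lower indices. -/
def SymLower (F : CubicTensor) : Prop :=
  ∀ i m n p, F i m n p = F i n m p ∧ F i m n p = F i m p n

def G1111 (F : CubicTensor) : ℝ := F 0 0 0 0 * F 1 0 0 1 - F 0 0 0 1 * F 1 0 0 0
def G1112 (F : CubicTensor) : ℝ := F 0 0 0 0 * F 1 0 1 1 - F 0 0 1 1 * F 1 0 0 0
def G1122 (F : CubicTensor) : ℝ := F 0 0 0 0 * F 1 1 1 1 - F 0 1 1 1 * F 1 0 0 0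
def G1212 (F : CubicTensor) : ℝ := F 0 0 0 1 * F 1 0 1 1 - F 0 0 1 1 * F 1 0 0 1
def G1222 (F : CubicTensor) : ℝ := F 0 0 0 1 * F 1 1 1 1 - F 0 1 1 1 * F 1 0 0 1
def G2222 (F : CubicTensor) : ℝ := F 0 0 1 1 * F 1 1 1 1 - F 0 1 1 1 * F 1 0 1 1
/-- The binary quartic form ω[1] associated with F. -/
def omega1 (F : CubicTensor) (u v : ℝ) : ℝ :=
  G1111 F * u^4 + 2 * G1112 F * u^3 * v + (3 * G1212 F + G1122 F) * u^2 * v^2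
    + 2 * G1222 F * u * v^3 + G2222 F * v^4

theorem right_composition_G1111 (F Ft : CubicTensor) (T : Matrix (Fin 2) (Fin 2) ℝ)
    (hFt : SymLower Ft) (hT : IsUnit T.det)
    (hrel : ∀ i m n p, F i m n p =
      ∑ mt : Fin 2, ∑ nt : Fin 2, ∑ pt : Fin 2,
        Ft i mt nt pt * T mt m * T nt n * T pt p) :
    G1111 F = T.det * omega1 Ft (T 0 0) (T 1 0) := by
  have a1 : ∀ i, Ft i 0 1 0 = Ft i 0 0 1 := fun i => (hFt i 0 1 0).2
  have a2 : ∀ i, Ft i 1 0 0 = Ft i 0 0 1 := fun i => ((hFt i 1 0 0).1).trans (a1 i)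
  have a3 : ∀ i, Ft i 1 0 1 = Ft i 0 1 1 := fun i => (hFt i 1 0 1).1
  have a4 : ∀ i, Ft i 1 1 0 = Ft i 0 1 1 := fun i => ((hFt i 1 1 0).2).trans (a3 i)
  simp only [G1111, hrel, Fin.sum_univ_two, omega1, G1112, G1122, G1212, G1222, G2222,
    Matrix.det_fin_two, a1, a2, a3, a4]
  ring
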